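/- arXiv:1601.07139 — 3 statements merged into one kernel-verified Lean document; each statement's English description precedes it below -/
import Mathlib

section
/- Let γ : I → M and γ' : I' → M be injective analytic immersive curves from open real intervals into an analytic manifold M that are embeddings onto their images. Suppose there exist sequences (t_n) in I \ {t} converging to t ∈ I and (t'_n) in I' \ {t'} converging to t' ∈ I' with γ(t_n) = γ'(t'_n) for all n. Then there exist open subintervals J ⊆ I and J' ⊆ I' with t ∈ J and t' ∈ J' such that γ(J) = γ'(J'). -/
/-!
Composing `γ` with a linear functional that does not vanish on its velocity at `t` gives a scalar
analytic function with nonzero derivative, whose analytic local inverse yields an analytic left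
inverse `φ` of `γ` near `t`. The analytic map `g = φ ∘ γ'` satisfies `γ ∘ g = γ'` along `u'`,
hence near `t'` by the identity theorem. Differentiating shows `g'(t') ≠ 0`, so `g` maps small
open intervals around `t'` homeomorphically onto open intervals around `t`, on which the two
curves have the same image.
-/

open Topology Filter

section AnalyticCurve

variable {𝕜 : Type*} [RCLike 𝕜] {E : Type*} [NormedAddCommGroup E] [NormedSpace 𝕜 E]

theorem AnalyticAt.exists_analyticAt_leftInverse {γ : 𝕜 → E} {t : 𝕜} (hγ : AnalyticAt 𝕜 γ t)
    (hγ' : deriv γ t ≠ 0) :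
    ∃ φ : E → 𝕜, AnalyticAt 𝕜 φ (γ t) ∧ ∀ᶠ s in 𝓝 t, φ (γ s) = s := by
  obtain ⟨ℓ, -, hℓ⟩ := exists_dual_vector 𝕜 (deriv γ t) (norm_ne_zero_iff.2 hγ')
  have hℓγ : AnalyticAt 𝕜 (ℓ ∘ γ) t := ℓ.analyticAt _ |>.comp hγ
  have hderiv : deriv (ℓ ∘ γ) t ≠ 0 := by
    rw [ℓ.hasFDerivAt.comp_hasDerivAt t hγ.differentiableAt.hasDerivAt |>.deriv, hℓ]
    exact_mod_cast norm_ne_zero_iff.2 hγ'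
  refine ⟨hℓγ.hasStrictDerivAt.localInverse _ _ _ hderiv ∘ ℓ, ?_,
    hℓγ.hasStrictDerivAt.eventually_left_inverse hderiv⟩
  exact (hℓγ.analyticAt_localInverse hderiv).comp_of_eq (ℓ.analyticAt _) rfl

theorem AnalyticAt.exists_reparam_eventuallyEq_of_tendsto {γ γ' : 𝕜 → E} {t t' : 𝕜}
    (hγ : AnalyticAt 𝕜 γ t) (hγd : deriv γ t ≠ 0) (hγ' : AnalyticAt 𝕜 γ' t')
    {u u' : ℕ → 𝕜} (hu : Tendsto u atTop (𝓝 t)) (hu' : Tendsto u' atTop (𝓝[≠] t'))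
    (heq : ∀ n, γ (u n) = γ' (u' n)) :
    ∃ g : 𝕜 → 𝕜, AnalyticAt 𝕜 g t' ∧ g t' = t ∧ γ ∘ g =ᶠ[𝓝 t'] γ' := by
  obtain ⟨φ, hφ, hφγ⟩ := hγ.exists_analyticAt_leftInverse hγd
  have hγt : γ t = γ' t' := tendsto_nhds_unique (hγ.continuousAt.tendsto.comp hu)
    (by simpa only [Function.comp_def, heq] using
      hγ'.continuousAt.tendsto.comp (hu'.mono_right nhdsWithin_le_nhds))
  have hgt : φ (γ' t') = t := hγt ▸ hφγ.self_of_nhds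
  have hg : AnalyticAt 𝕜 (φ ∘ γ') t' := hφ.comp_of_eq hγ' hγt.symm
  have hγg : AnalyticAt 𝕜 (γ ∘ φ ∘ γ') t' := hγ.comp_of_eq hg hgt
  refine ⟨φ ∘ γ', hg, hgt, (hγg.frequently_eq_iff_eventually_eq hγ').1 (hu'.frequently (Eventually.frequently ?_))⟩
  filter_upwards [hu.eventually hφγ] with n hn
  simp only [Function.comp_apply, ← heq, hn]

end AnalyticCurve

theorem deriv_ne_zero_of_comp_eventuallyEq {𝕜 : Type*} [NontriviallyNormedField 𝕜]
    {E : Type*} [NormedAddCommGroup E] [NormedSpace 𝕜 E] {g : 𝕜 → 𝕜} {γ γ' : 𝕜 → E} {t' : 𝕜}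
    (hg : DifferentiableAt 𝕜 g t') (hγ : DifferentiableAt 𝕜 γ (g t'))
    (h : γ ∘ g =ᶠ[𝓝 t'] γ') (hγ' : deriv γ' t' ≠ 0) : deriv g t' ≠ 0 := by
  intro hg0
  rw [← h.deriv_eq, deriv.scomp t' hγ hg, hg0, zero_smul] at hγ'
  exact hγ' rfl

theorem HasStrictFDerivAt.exists_isPreconnected_isOpen_image_subset {E F : Type*}
    [NormedAddCommGroup E] [NormedSpace ℝ E] [CompleteSpace E]
    [NormedAddCommGroup F] [NormedSpace ℝ F] [CompleteSpace F]
    {f : E → F} {f' : E ≃L[ℝ] F} {a : E} (hf : HasStrictFDerivAt f (f' : E →L[ℝ] F) a)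
    {U : Set E} (hU : U ∈ 𝓝 a) :
    ∃ V ⊆ U, IsOpen V ∧ IsPreconnected V ∧ a ∈ V ∧ IsOpen (f '' V) ∧ IsPreconnected (f '' V) := by
  set e := hf.toOpenPartialHomeomorph f
  obtain ⟨ε, hε, hεU⟩ := Metric.mem_nhds_iff.1
    (inter_mem hU (e.open_source.mem_nhds hf.mem_toOpenPartialHomeomorph_source))
  have hV := (convex_ball a ε).isPreconnected
  refine ⟨_, fun x hx => (hεU hx).1, Metric.isOpen_ball, hV, Metric.mem_ball_self hε,
    e.isOpen_image_of_subset_source Metric.isOpen_ball fun x hx => (hεU hx).2,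
    hV.image f (e.continuousOn.mono fun x hx => (hεU hx).2)⟩

theorem analytic_curves_locally_coincide_general
    {E : Type*} [NormedAddCommGroup E] [NormedSpace ℝ E]
    (I I' : Set ℝ) (hIo : IsOpen I) (hI'o : IsOpen I')
    (γ γ' : ℝ → E)
    (hγa : AnalyticOnNhd ℝ γ I) (hγ'a : AnalyticOnNhd ℝ γ' I')
    (hγim : ∀ s ∈ I, deriv γ s ≠ 0) (hγ'im : ∀ s ∈ I', deriv γ' s ≠ 0)
    (t : ℝ) (ht : t ∈ I) (t' : ℝ) (ht' : t' ∈ I')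
    (u u' : ℕ → ℝ)
    (hu' : ∀ n, u' n ∈ I' \ {t'})
    (hul : Tendsto u atTop (𝓝 t)) (hu'l : Tendsto u' atTop (𝓝 t'))
    (heq : ∀ n, γ (u n) = γ' (u' n)) :
    ∃ J J' : Set ℝ, IsOpen J ∧ IsOpen J' ∧ IsPreconnected J ∧ IsPreconnected J' ∧
      t ∈ J ∧ t' ∈ J' ∧ J ⊆ I ∧ J' ⊆ I' ∧ γ '' J = γ' '' J' := by
  have hu'l' : Tendsto u' atTop (𝓝[≠] t') :=
    tendsto_nhdsWithin_iff.2 ⟨hu'l, .of_forall fun n => (hu' n).2⟩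
  obtain ⟨g, hga, hgt, hγg⟩ :=
    (hγa t ht).exists_reparam_eventuallyEq_of_tendsto (hγim t ht) (hγ'a t' ht') hul hu'l' heq
  have hg' : deriv g t' ≠ 0 := deriv_ne_zero_of_comp_eventuallyEq hga.differentiableAt
    (hgt ▸ (hγa t ht).differentiableAt) hγg (hγ'im t' ht')
  have hU : I' ∩ g ⁻¹' I ∩ {s | γ (g s) = γ' s} ∈ 𝓝 t' :=
    inter_mem (inter_mem (hI'o.mem_nhds ht')
      (hga.continuousAt.preimage_mem_nhds (hgt ▸ hIo.mem_nhds ht))) hγg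
  obtain ⟨J', hJ'U, hJ'o, hJ'c, htJ', hJo, hJc⟩ :=
    (hga.hasStrictDerivAt.hasStrictFDerivAt_equiv hg').exists_isPreconnected_isOpen_image_subset hU
  refine ⟨g '' J', J', hJo, hJ'o, hJc, hJ'c, ⟨t', htJ', hgt⟩, htJ', ?_,
    fun s hs => (hJ'U hs).1.1, ?_⟩
  · rintro _ ⟨s, hs, rfl⟩
    exact (hJ'U hs).1.2
  · rw [Set.image_image]
    exact Set.EqOn.image_eq fun s hs => (hJ'U hs).2

/-- Two injective analytic immersive embedded curves into a
finite-dimensional space (serving, via a chart, as the analytic manifold `M`)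
whose images meet along sequences accumulating at interior points coincide on
open subintervals around those points. -/
theorem analytic_curves_locally_coincide
    {E : Type*} [NormedAddCommGroup E] [NormedSpace ℝ E] [FiniteDimensional ℝ E]
    (I I' : Set ℝ) (hIo : IsOpen I) (hI'o : IsOpen I')
    (hIc : IsPreconnected I) (hI'c : IsPreconnected I')
    (γ γ' : ℝ → E)
    (hγa : AnalyticOnNhd ℝ γ I) (hγ'a : AnalyticOnNhd ℝ γ' I')
    (hγim : ∀ s ∈ I, deriv γ s ≠ 0) (hγ'im : ∀ s ∈ I', deriv γ' s ≠ 0)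
    (hγinj : Set.InjOn γ I) (hγ'inj : Set.InjOn γ' I')
    (hγemb : Topology.IsEmbedding (I.restrict γ))
    (hγ'emb : Topology.IsEmbedding (I'.restrict γ'))
    (t : ℝ) (ht : t ∈ I) (t' : ℝ) (ht' : t' ∈ I')
    (u u' : ℕ → ℝ)
    (hu : ∀ n, u n ∈ I \ {t}) (hu' : ∀ n, u' n ∈ I' \ {t'})
    (hul : Tendsto u atTop (𝓝 t)) (hu'l : Tendsto u' atTop (𝓝 t'))
    (heq : ∀ n, γ (u n) = γ' (u' n)) :
    ∃ J J' : Set ℝ, IsOpen J ∧ IsOpen J' ∧ IsPreconnected J ∧ IsPreconnected J' ∧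
      t ∈ J ∧ t' ∈ J' ∧ J ⊆ I ∧ J' ⊆ I' ∧ γ '' J = γ' '' J' :=
  analytic_curves_locally_coincide_general I I' hIo hI'o γ γ' hγa hγ'a hγim hγ'im t ht t' ht' u u'
    hu' hul hu'l heq
end

section
/- Let G be a group, G_S ≤ G a subgroup invariant under conjugation by g₁ and g₋₁ and their inverses, and suppose g₁² ∈ G_S, g₋₁² ∈ G_S (modulo G_S: [g_{±1}] = [g_{±1}^{-1}]). Then for every n ∈ ℕ, the element q_n⁺ := (g₋₁ g₁)ⁿ (g₁ g₋₁)ⁿ lies in G_S. -/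
/-!
Since `g²` lies in `G_S` and `g` normalizes `G_S`, the sandwich `g q g = (g q g⁻¹) g²` stays in
`G_S` for `q ∈ G_S`. Peeling one factor off each power gives
`q_{n+1}⁺ = g₋₁ (g₁ q_n⁺ g₁) g₋₁`, so induction on `n` finishes.
-/

theorem Subgroup.mul_mul_mem_of_sq_mem {G : Type*} [Group G] {H : Subgroup G} {g x : G}
    (hg : ∀ q ∈ H, g * q * g⁻¹ ∈ H) (hsq : g ^ 2 ∈ H) (hx : x ∈ H) : g * x * g ∈ H := by
  have hsplit : g * x * g = (g * x * g⁻¹) * g ^ 2 := by group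
  rw [hsplit]
  exact H.mul_mem (hg x hx) hsq

theorem mul_pow_succ_mul_mul_pow_succ {G : Type*} [Group G] (a b : G) (n : ℕ) :
    (b * a) ^ (n + 1) * (a * b) ^ (n + 1) = b * (a * ((b * a) ^ n * (a * b) ^ n) * a) * b := by
  rw [pow_succ', pow_succ]
  group

theorem q_n_mem_stabilizer_general
    {G : Type*} [Group G] (GS : Subgroup G) (g1 gm1 : G)
    (hc1' : ∀ q ∈ GS, g1 * q * g1⁻¹ ∈ GS)
    (hc2' : ∀ q ∈ GS, gm1 * q * gm1⁻¹ ∈ GS)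
    (hsq1 : g1 ^ 2 ∈ GS) (hsq2 : gm1 ^ 2 ∈ GS) :
    ∀ n : ℕ, (gm1 * g1) ^ n * (g1 * gm1) ^ n ∈ GS := by
  intro n
  induction n with
  | zero => simp
  | succ n ih =>
    rw [mul_pow_succ_mul_mul_pow_succ]
    exact GS.mul_mul_mem_of_sq_mem hc2' hsq2 (GS.mul_mul_mem_of_sq_mem hc1' hsq1 ih)

/-- If the subgroup `G_S` is invariant under conjugation by `g₁`,
`g₋₁` and their inverses, and `g₁² ∈ G_S`, `g₋₁² ∈ G_S` (i.e. `[g_{±1}] = [g_{±1}⁻¹]`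
modulo `G_S`), then `q_n⁺ := (g₋₁ g₁)ⁿ (g₁ g₋₁)ⁿ ∈ G_S` for every `n ∈ ℕ`. -/
theorem q_n_mem_stabilizer
    {G : Type*} [Group G] (GS : Subgroup G) (g1 gm1 : G)
    (hc1 : ∀ q ∈ GS, g1⁻¹ * q * g1 ∈ GS)
    (hc1' : ∀ q ∈ GS, g1 * q * g1⁻¹ ∈ GS)
    (hc2 : ∀ q ∈ GS, gm1⁻¹ * q * gm1 ∈ GS)
    (hc2' : ∀ q ∈ GS, gm1 * q * gm1⁻¹ ∈ GS)
    (hsq1 : g1 ^ 2 ∈ GS) (hsq2 : gm1 ^ 2 ∈ GS) :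
    ∀ n : ℕ, (gm1 * g1) ^ n * (g1 * gm1) ^ n ∈ GS :=
  q_n_mem_stabilizer_general GS g1 gm1 hc1' hc2' hsq1 hsq2
end

section
/- Define σ : ℤ \ {0} → {−1, 1} by σ(n) = (−1)^{n−1} for n > 0 and σ(n) = (−1)^n for n < 0. Let G be a group with subgroup G_S, and g₁, g₋₁ ∈ G with [g_{±1}] = [g_{±1}^{-1}] in G/G_S, G_S invariant under the relevant conjugations, and set h_n defined by [h_n] = [g_{−1}(g_1 g_{−1})^{|n|−1}] for n ≤ −1 and [h_n] = [g_1 (g_{−1} g_1)^{n−1}] for n ≥ 1. Then the cosets g_n defined by g_n = h_n h_{n−1} ⋯ h_1 (for n ≥ 1) satisfy [g_n] = [g_{σ(1)} · g_{σ(2)} ⋯ g_{σ(n)}], i.e. [g_2] = [g_1 g_{−1}], [g_3] = [g_1 g_{−1} g_1], and so on. -/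
/-!
Modulo `GS`, the generators `g₁` and `g₋₁` become involutions of `H / (GS ∩ H)`, where
`H = ⟨g₁, g₋₁⟩` (this quotient exists because `H` normalizes `GS`). In a group generated by two
involutions `a`, `b`, conjugation by `a` inverts `u = a b`, the alternating words are
`A_{2m} = uᵐ` and `A_{2m+1} = uᵐ a`, and `A_{n+1} = a (b a)ⁿ A_n`; so the descending product of the
words `a (b a)^{k-1}` is exactly `A_n`. Replacing each word by `h_k`, which lies in the same left
coset of `GS`, keeps the left coset of the product, since every partial product of the words lies
in `H`.
-/

/-- The sign function `σ : ℤ \ {0} → {−1, 1}`, `σ(n) = (−1)^{n−1}` for `n > 0` and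
`σ(n) = (−1)ⁿ` for `n < 0` (extended arbitrarily at `0`). -/
def sigmaSign (n : ℤ) : ℤ :=
  if 0 < n then (if Odd n then 1 else -1) else (if Even n then 1 else -1)

/-- The descending product `h_n ⋯ h_2 · h_1`. -/
def prodDesc {G : Type*} [Group G] (h : ℕ → G) : ℕ → G
  | 0 => 1
  | n + 1 => h (n + 1) * prodDesc h n

/-- The alternating product `g_{σ(1)} · g_{σ(2)} ⋯ g_{σ(n)}`, i.e.
`g₁`, `g₁ g₋₁`, `g₁ g₋₁ g₁`, … -/
def altProd {G : Type*} [Group G] (g1 gm1 : G) : ℕ → G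
  | 0 => 1
  | k + 1 => altProd g1 gm1 k * (if sigmaSign (k + 1) = 1 then g1 else gm1)

section
variable {G : Type*} [Group G]

theorem sigmaSign_natCast_add_one (n : ℕ) : sigmaSign (n + 1) = if Even n then 1 else -1 := by
  have hpos : (0 : ℤ) < n + 1 := by positivity
  have hodd : Odd ((n : ℤ) + 1) ↔ Even n := by
    rw [← Int.not_even_iff_odd, Int.even_add_one, not_not, Int.even_coe_nat]
  by_cases hn : Even n <;> simp [sigmaSign, hpos, hodd, hn]

theorem altProd_succ (a b : G) (n : ℕ) :
    altProd a b (n + 1) = altProd a b n * if Even n then a else b := by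
  rw [altProd, sigmaSign_natCast_add_one]
  by_cases hn : Even n <;> simp [hn]

theorem altProd_two_mul (a b : G) (m : ℕ) : altProd a b (2 * m) = (a * b) ^ m := by
  induction m with
  | zero => rw [mul_zero, pow_zero]; rfl
  | succ m ih =>
    rw [Nat.mul_succ, altProd_succ, altProd_succ, ih, if_pos (even_two_mul m),
      if_neg (Nat.not_even_iff_odd.2 (odd_two_mul_add_one m)), pow_succ, mul_assoc]

theorem altProd_two_mul_add_one (a b : G) (m : ℕ) :
    altProd a b (2 * m + 1) = (a * b) ^ m * a := by
  rw [altProd_succ, altProd_two_mul, if_pos (even_two_mul m)]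

theorem mul_pow_eq_inv_pow_mul {a b : G} (ha : a ^ 2 = 1) (hb : b ^ 2 = 1) (m : ℕ) :
    a * (a * b) ^ m = ((a * b) ^ m)⁻¹ * a := by
  have ha' : a⁻¹ = a := inv_eq_of_mul_eq_one_right (by rw [← sq, ha])
  have hb' : b⁻¹ = b := inv_eq_of_mul_eq_one_right (by rw [← sq, hb])
  have hconj : a * (a * b) * a⁻¹ = (a * b)⁻¹ := by
    rw [mul_inv_rev, ha', hb', ← mul_assoc, ← sq, ha, one_mul]
  rw [← inv_pow, ← hconj, conj_pow, inv_mul_cancel_right]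

theorem altProd_succ_of_sq_eq_one {a b : G} (ha : a ^ 2 = 1) (hb : b ^ 2 = 1) (n : ℕ) :
    altProd a b (n + 1) = a * (b * a) ^ n * altProd a b n := by
  have hconj := mul_pow_eq_inv_pow_mul ha hb
  rw [← mul_pow_mul]
  obtain ⟨m, rfl | rfl⟩ := Nat.even_or_odd' n
  · rw [altProd_two_mul_add_one, altProd_two_mul, mul_assoc _ a, hconj, two_mul, pow_add]
    group
  · change altProd a b (2 * (m + 1)) = _
    rw [altProd_two_mul_add_one, altProd_two_mul, ← mul_assoc, mul_assoc _ a, hconj,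
      mul_assoc, mul_assoc, ← sq, ha, mul_one, show 2 * m + 1 = m + 1 + m by ring,
      pow_add _ (m + 1) m, mul_inv_cancel_right]

theorem prodDesc_eq_altProd_of_sq_eq_one {a b : G} (ha : a ^ 2 = 1) (hb : b ^ 2 = 1) (n : ℕ) :
    prodDesc (fun k => a * (b * a) ^ (k - 1)) n = altProd a b n := by
  induction n with
  | zero => rfl
  | succ n ih => rw [prodDesc, ih, altProd_succ_of_sq_eq_one ha hb, Nat.add_sub_cancel]

theorem map_altProd {Q : Type*} [Group Q] (f : G →* Q) (a b : G) (n : ℕ) :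
    f (altProd a b n) = altProd (f a) (f b) n := by
  induction n with
  | zero => exact map_one f
  | succ n ih => simp only [altProd, map_mul, ih, apply_ite f]

theorem map_prodDesc {Q : Type*} [Group Q] (f : G →* Q) (h : ℕ → G) (n : ℕ) :
    f (prodDesc h n) = prodDesc (fun k => f (h k)) n := by
  induction n with
  | zero => exact map_one f
  | succ n ih => simp only [prodDesc, map_mul, ih]

theorem Subgroup.normal_subgroupOf_of_conj_mem {K H : Subgroup G}
    (hK : ∀ x ∈ H, ∀ q ∈ K, x⁻¹ * q * x ∈ K) : (K.subgroupOf H).Normal where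
  conj_mem q hq x := by simpa [Subgroup.mem_subgroupOf] using hK _ (H.inv_mem x.2) _ hq

theorem inv_prodDesc_mul_prodDesc_mem {K : Subgroup G} {h w : ℕ → G}
    (hK : ∀ n, ∀ q ∈ K, (prodDesc w n)⁻¹ * q * prodDesc w n ∈ K)
    (hhw : ∀ k, 1 ≤ k → (h k)⁻¹ * w k ∈ K) (n : ℕ) : (prodDesc h n)⁻¹ * prodDesc w n ∈ K := by
  induction n with
  | zero => simp [prodDesc]
  | succ n ih =>
    have e : (prodDesc h (n + 1))⁻¹ * prodDesc w (n + 1) = ((prodDesc h n)⁻¹ * prodDesc w n) *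
        ((prodDesc w n)⁻¹ * ((h (n + 1))⁻¹ * w (n + 1)) * prodDesc w n) := by
      simp only [prodDesc]; group
    rw [e]
    exact K.mul_mem ih (hK n _ (hhw _ n.succ_pos))

theorem inv_prodDesc_mul_altProd_mem {K H : Subgroup G}
    (hK : ∀ x ∈ H, ∀ q ∈ K, x⁻¹ * q * x ∈ K) {a b : G} (ha : a ∈ H) (hb : b ∈ H)
    (ha2 : a ^ 2 ∈ K) (hb2 : b ^ 2 ∈ K) (n : ℕ) :
    (prodDesc (fun k => a * (b * a) ^ (k - 1)) n)⁻¹ * altProd a b n ∈ K := by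
  lift a to H using ha
  lift b to H using hb
  have := Subgroup.normal_subgroupOf_of_conj_mem hK
  let π := QuotientGroup.mk' (K.subgroupOf H)
  have hsq (x : H) (hx : (x : G) ^ 2 ∈ K) : π x ^ 2 = 1 := by
    rw [← map_pow, QuotientGroup.mk'_apply, QuotientGroup.eq_one_iff]
    exact Subgroup.mem_subgroupOf.2 (by simpa using hx)
  have hπ : π (prodDesc (fun k => a * (b * a) ^ (k - 1)) n) = π (altProd a b n) := by
    rw [map_prodDesc, map_altProd, ← prodDesc_eq_altProd_of_sq_eq_one (hsq a ha2) (hsq b hb2)]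
    simp only [map_mul, map_pow]
  have hmem := Subgroup.mem_subgroupOf.1 (QuotientGroup.eq.1 hπ)
  rw [Subgroup.coe_mul, Subgroup.coe_inv, ← H.coe_subtype, map_prodDesc, map_altProd] at hmem
  simpa using hmem

end

/-- With `[g_{±1}] = [g_{±1}⁻¹]` modulo `G_S` (i.e. `g_{±1}² ∈ G_S`),
`G_S` invariant under the relevant conjugations, and `h_n` in the class of
`g₁ (g₋₁ g₁)^{n−1}` for `n ≥ 1`, the elements `g_n = h_n h_{n−1} ⋯ h_1` satisfy
`[g_n] = [g_{σ(1)} g_{σ(2)} ⋯ g_{σ(n)}]`, i.e. `[g₂] = [g₁ g₋₁]`, `[g₃] = [g₁ g₋₁ g₁]`,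
and so on. -/
theorem negative_decomp_class_formula
    {G : Type*} [Group G] (GS : Subgroup G) (g1 gm1 : G)
    (hconj : ∀ x ∈ Subgroup.closure ({g1, gm1} : Set G), ∀ q ∈ GS, x⁻¹ * q * x ∈ GS)
    (hsq1 : g1 ^ 2 ∈ GS) (hsq2 : gm1 ^ 2 ∈ GS)
    (h : ℕ → G)
    (hh : ∀ k : ℕ, 1 ≤ k → (h k)⁻¹ * (g1 * (gm1 * g1) ^ (k - 1)) ∈ GS) :
    ∀ n : ℕ, 1 ≤ n → (prodDesc h n)⁻¹ * altProd g1 gm1 n ∈ GS := by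
  intro n _
  set H := Subgroup.closure ({g1, gm1} : Set G)
  have hg1 : g1 ∈ H := Subgroup.subset_closure (by simp)
  have hgm1 : gm1 ∈ H := Subgroup.subset_closure (by simp)
  have hwH (m : ℕ) : prodDesc (fun k => g1 * (gm1 * g1) ^ (k - 1)) m ∈ H := by
    induction m with
    | zero => exact H.one_mem
    | succ m ih => exact H.mul_mem (H.mul_mem hg1 (H.pow_mem (H.mul_mem hgm1 hg1) _)) ih
  have hhw := inv_prodDesc_mul_prodDesc_mem (fun m => hconj _ (hwH m)) hh n
  have hwA := inv_prodDesc_mul_altProd_mem hconj hg1 hgm1 hsq1 hsq2 n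
  simpa only [mul_assoc, mul_inv_cancel_left] using GS.mul_mem hhw hwA
end
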